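/- arXiv:1903.11857 — 3 statements merged into one kernel-verified Lean document; each statement's English description precedes it below -/
import Mathlib

section
/- (Theorem 2) The modified ER algorithm follows the importance discounting and combination scheme: let H = {H_1,…,H_N} with N ≥ 2, let β_{n,i} ≥ 0 with Σ_{n=1}^N β_{n,i} ≤ 1 be the belief degrees of L assessments with assessment BBAs m_i, and let the weights satisfy w_i ∈ [0,1] and Σ_{i=1}^L w_i = 1. Define the modified ER recursion with m_{n,i} = w_i β_{n,i}, m̄_{H,i} = 1 − w_i, m̃_{H,i} = w_i(1 − Σ_n β_{n,i}), combined via Eq.(8) with the normalizing factor K_{I(i+1)} = [1 − Σ_j Σ_{p≠j} m_{j,I(i)} m_{p,i+1}]^{-1}, and final belief degrees β_n = m_{n,I(L)} / (1 − m̄_{H,I(L)}) and β_H = m̃_{H,I(L)} / (1 − m̄_{H,I(L)}). If at every step the conflict is strictly less than 1 and m̄_{H,I(L)} < 1, then for every i the triple (m_{n,I(i)} on singletons, m̃_{H,I(i)} on H, m̄_{H,I(i)} on Ω) equals the extended Dempster combination of the importance-discounted IBBAs w_1 ⊙ m_1, …, w_i ⊙ m_i, and the final belief degrees β_n and β_H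 equal the normalization (dividing by 1 minus the Ω-mass) of the extended Dempster combination of all L importance-discounted IBBAs, evaluated at {H_n} and H respectively. -/
open Finset

/-- A basic belief assignment (BBA) on a finite nonempty frame `Θ`. -/
def IsBBA {Θ : Type*} [Fintype Θ] [DecidableEq Θ] (m : Finset Θ → ℝ) : Prop :=
  m ∅ = 0 ∧ (∀ A, 0 ≤ m A) ∧ ∑ A : Finset Θ, m A = 1

/-- Shafer's reliability discounting of `m` by the reliability factor `α`. -/
def rdiscount {Θ : Type*} [Fintype Θ] [DecidableEq Θ] (α : ℝ) (m : Finset Θ → ℝ) :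
    Finset Θ → ℝ :=
  fun A => if A = Finset.univ then α * m A + (1 - α) else α * m A

/-- The conflict between two mass functions. -/
def conflict {Θ : Type*} [Fintype Θ] [DecidableEq Θ] (m1 m2 : Finset Θ → ℝ) : ℝ :=
  ∑ B : Finset Θ, ∑ C : Finset Θ, if B ∩ C = ∅ then m1 B * m2 C else 0

/-- Dempster's rule of combination. -/
noncomputable def dempster {Θ : Type*} [Fintype Θ] [DecidableEq Θ] (m1 m2 : Finset Θ → ℝ) :
    Finset Θ → ℝ :=
  fun A => if A = ∅ then 0
    else (∑ B : Finset Θ, ∑ C : Finset Θ, if B ∩ C = A then m1 B * m2 C else 0) /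
      (1 - conflict m1 m2)

/-- Iterated Dempster combination of `d 0, …, d i`. -/
noncomputable def combUpTo {Θ : Type*} [Fintype Θ] [DecidableEq Θ] (d : ℕ → Finset Θ → ℝ) :
    ℕ → Finset Θ → ℝ
  | 0 => d 0
  | i + 1 => dempster (combUpTo d (i)) (d (i + 1))

/-- The assessment BBA on the frame `{H_1,…,H_N}` determined by belief degrees `β`. -/
def assessBBA {N : ℕ} (β : Fin N → ℝ) : Finset (Fin N) → ℝ :=
  fun A => if A = Finset.univ then 1 - ∑ n, β n
    else ∑ n : Fin N, if A = {n} then β n else 0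

/-- An importance basic belief assignment (IBBA): `ω` is the mass on the
indecisiveness element `Ω`. -/
def IsIBBA {Θ : Type*} [Fintype Θ] [DecidableEq Θ] (m : Finset Θ → ℝ) (ω : ℝ) : Prop :=
  m ∅ = 0 ∧ (∀ A, 0 ≤ m A) ∧ 0 ≤ ω ∧ (∑ A : Finset Θ, m A) + ω = 1

/-- Importance discounting of a BBA `m` by the importance factor `β`. -/
def impDiscount {Θ : Type*} [Fintype Θ] [DecidableEq Θ] (β : ℝ) (m : Finset Θ → ℝ) :
    (Finset Θ → ℝ) × ℝ :=
  (fun A => β * m A, 1 - β)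

/-- The extended Dempster rule of combination of two IBBAs. -/
noncomputable def edComb {Θ : Type*} [Fintype Θ] [DecidableEq Θ]
    (p q : (Finset Θ → ℝ) × ℝ) : (Finset Θ → ℝ) × ℝ :=
  (fun A => if A = ∅ then 0
      else (1 - conflict p.1 q.1)⁻¹ *
        ((∑ B : Finset Θ, ∑ C : Finset Θ, if B ∩ C = A then p.1 B * q.1 C else 0) +
          p.1 A * q.2 + p.2 * q.1 A),
    (1 - conflict p.1 q.1)⁻¹ * (p.2 * q.2))

/-- Iterated extended Dempster combination of `d 0, …, d i`. -/
noncomputable def edCombUpTo {Θ : Type*} [Fintype Θ] [DecidableEq Θ] (d : ℕ → (Finset Θ → ℝ) × ℝ) :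
    ℕ → (Finset Θ → ℝ) × ℝ
  | 0 => d 0
  | i + 1 => edComb (edCombUpTo d i) (d (i + 1))

/-- The singleton conflict `Σ_{j≠p} m1({H_j})·m2({H_p})`. -/
def singConflict {N : ℕ} (m1 m2 : Finset (Fin N) → ℝ) : ℝ :=
  ∑ j : Fin N, ∑ p : Fin N, if j ≠ p then m1 {j} * m2 {p} else 0

/-- One recursive aggregation step of the original ER algorithm. -/
noncomputable def erStep {N : ℕ} (s : (Fin N → ℝ) × ℝ) (b : Fin N → ℝ) (h : ℝ) : (Fin N → ℝ) × ℝ :=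
  (fun n => (1 - ∑ j : Fin N, ∑ p : Fin N, if p ≠ j then s.1 j * b p else 0)⁻¹ *
      (s.1 n * b n + s.1 n * h + s.2 * b n),
   (1 - ∑ j : Fin N, ∑ p : Fin N, if p ≠ j then s.1 j * b p else 0)⁻¹ * (s.2 * h))

/-- The recursively defined masses of the original ER algorithm. -/
noncomputable def erSeq {N : ℕ} (b : ℕ → Fin N → ℝ) (h : ℕ → ℝ) : ℕ → (Fin N → ℝ) × ℝ
  | 0 => (b 0, h 0)
  | i + 1 => erStep (erSeq b h i) (b (i + 1)) (h (i + 1))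

/-- One recursive aggregation step of the modified ER algorithm, on triples
`(masses on singletons, m̃_H, m̄_H)`. -/
noncomputable def merStep {N : ℕ} (s : (Fin N → ℝ) × ℝ × ℝ) (b : Fin N → ℝ) (tld brd : ℝ) :
    (Fin N → ℝ) × ℝ × ℝ :=
  (fun n => (1 - ∑ j : Fin N, ∑ p : Fin N, if p ≠ j then s.1 j * b p else 0)⁻¹ *
      (s.1 n * b n + s.1 n * (brd + tld) + (s.2.2 + s.2.1) * b n),
   (1 - ∑ j : Fin N, ∑ p : Fin N, if p ≠ j then s.1 j * b p else 0)⁻¹ *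
      (s.2.1 * tld + s.2.1 * brd + s.2.2 * tld),
   (1 - ∑ j : Fin N, ∑ p : Fin N, if p ≠ j then s.1 j * b p else 0)⁻¹ * (s.2.2 * brd))

/-- The recursively defined masses of the modified ER algorithm. -/
noncomputable def merSeq {N : ℕ} (b : ℕ → Fin N → ℝ) (tld brd : ℕ → ℝ) : ℕ → (Fin N → ℝ) × ℝ × ℝ
  | 0 => (b 0, tld 0, brd 0)
  | i + 1 => merStep (merSeq b tld brd i) (b (i + 1)) (tld (i + 1)) (brd (i + 1))

/-- Reliability-importance discounting: the mass-function part `m^{α,β}`. -/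
def riDiscount {Θ : Type*} [Fintype Θ] [DecidableEq Θ] (α β : ℝ) (m : Finset Θ → ℝ) :
    Finset Θ → ℝ :=
  fun A => if A = Finset.univ then α * β * m A + (1 - α) * β else α * β * m A

variable {N : ℕ}

def MySimple (m : Finset (Fin N) → ℝ) : Prop :=
  ∀ A : Finset (Fin N), A ≠ Finset.univ → (∀ n : Fin N, A ≠ {n}) → m A = 0

lemma sInterS (j p : Fin N) : ({j} : Finset (Fin N)) ∩ {p} = if j = p then {j} else ∅ := by
  split
  · subst ‹j = p›; simp
  · exact Finset.singleton_inter_of_notMem (by simpa using ‹¬ j = p›)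

lemma univ_ne_sing (hN : 2 ≤ N) (n : Fin N) : (Finset.univ : Finset (Fin N)) ≠ {n} := by
  intro h
  have := congrArg Finset.card h
  simp [Finset.card_univ] at this
  omega

lemma univ_ne_empty' (hN : 2 ≤ N) : (Finset.univ : Finset (Fin N)) ≠ ∅ := by
  haveI : NeZero N := ⟨by omega⟩
  exact Finset.univ_nonempty.ne_empty

lemma simple_sum (hN : 2 ≤ N) (g : Finset (Fin N) → ℝ)
    (hg : ∀ B : Finset (Fin N), B ≠ Finset.univ → (∀ n : Fin N, B ≠ {n}) → g B = 0) :
    ∑ B : Finset (Fin N), g B = g Finset.univ + ∑ n : Fin N, g {n} := by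
  classical
  set T : Finset (Finset (Fin N)) :=
    insert Finset.univ (Finset.univ.image fun n : Fin N => ({n} : Finset (Fin N))) with hT
  have hnm : (Finset.univ : Finset (Fin N)) ∉
      Finset.univ.image (fun n : Fin N => ({n} : Finset (Fin N))) := by
    intro h
    obtain ⟨n, -, hn⟩ := Finset.mem_image.mp h
    exact univ_ne_sing hN n hn.symm
  have h1 : ∑ B ∈ T, g B = ∑ B : Finset (Fin N), g B := by
    refine Finset.sum_subset (Finset.subset_univ T) fun B _ hB => ?_
    simp only [hT, Finset.mem_insert, Finset.mem_image, not_or, not_exists] at hB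
    exact hg B hB.1 fun n h => hB.2 n ⟨Finset.mem_univ n, h.symm⟩
  rw [← h1, hT, Finset.sum_insert hnm,
    Finset.sum_image (fun a _ b _ h => Finset.singleton_injective h)]

lemma double_sum (hN : 2 ≤ N) (m1 m2 : Finset (Fin N) → ℝ) (h1 : MySimple m1)
    (h2 : MySimple m2) (P : Finset (Fin N) → Finset (Fin N) → Prop)
    [∀ B C, Decidable (P B C)] :
    (∑ B : Finset (Fin N), ∑ C : Finset (Fin N), if P B C then m1 B * m2 C else 0)
    = (if P Finset.univ Finset.univ then m1 Finset.univ * m2 Finset.univ else 0)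
      + (∑ p : Fin N, if P Finset.univ {p} then m1 Finset.univ * m2 {p} else 0)
      + (∑ j : Fin N, if P {j} Finset.univ then m1 {j} * m2 Finset.univ else 0)
      + ∑ j : Fin N, ∑ p : Fin N, if P {j} {p} then m1 {j} * m2 {p} else 0 := by
  rw [simple_sum hN _ (fun B hB hB' => Finset.sum_eq_zero fun C _ => by
    rw [h1 B hB hB']; simp)]
  rw [simple_sum hN (fun C => if P Finset.univ C then m1 Finset.univ * m2 C else 0)
    (fun C hC hC' => by simp [h2 C hC hC'])]
  have : ∀ j : Fin N, (∑ C : Finset (Fin N), if P {j} C then m1 {j} * m2 C else 0)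
      = (if P {j} Finset.univ then m1 {j} * m2 Finset.univ else 0)
        + ∑ p : Fin N, if P {j} {p} then m1 {j} * m2 {p} else 0 :=
    fun j => simple_sum hN _ (fun C hC hC' => by simp [h2 C hC hC'])
  rw [Finset.sum_congr rfl fun j _ => this j, Finset.sum_add_distrib]
  ring

lemma conflict_eq (hN : 2 ≤ N) (m1 m2 : Finset (Fin N) → ℝ) (h1 : MySimple m1)
    (h2 : MySimple m2) :
    conflict m1 m2 = ∑ j : Fin N, ∑ p : Fin N, if p ≠ j then m1 {j} * m2 {p} else 0 := by
  rw [conflict, double_sum hN m1 m2 h1 h2]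
  rw [if_neg (by simpa using univ_ne_empty' hN)]
  rw [Finset.sum_eq_zero (fun p _ => if_neg (by simp))]
  rw [Finset.sum_eq_zero (fun j _ => if_neg (by simp))]
  simp only [zero_add, add_zero]
  refine Finset.sum_congr rfl fun j _ => Finset.sum_congr rfl fun p _ => ?_
  rw [sInterS]
  by_cases h : j = p
  · subst h; simp
  · rw [if_neg h, if_pos rfl, if_pos (Ne.symm h)]

lemma sing_cond (n j p : Fin N) :
    (({j} : Finset (Fin N)) ∩ {p} = {n}) ↔ (j = n ∧ p = n) := by
  rw [sInterS]
  constructor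
  · intro h
    by_cases hjp : j = p
    · rw [if_pos hjp] at h
      have hj := Finset.singleton_inj.mp h
      exact ⟨hj, hjp ▸ hj⟩
    · rw [if_neg hjp] at h
      exact absurd h.symm (Finset.singleton_ne_empty n)
  · rintro ⟨rfl, rfl⟩; simp

lemma sumA_singleton (hN : 2 ≤ N) (m1 m2 : Finset (Fin N) → ℝ) (h1 : MySimple m1)
    (h2 : MySimple m2) (n : Fin N) :
    (∑ B : Finset (Fin N), ∑ C : Finset (Fin N), if B ∩ C = {n} then m1 B * m2 C else 0)
    = m1 {n} * m2 {n} + m1 {n} * m2 Finset.univ + m1 Finset.univ * m2 {n} := by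
  rw [double_sum hN m1 m2 h1 h2]
  rw [if_neg (by simpa using univ_ne_sing hN n)]
  have t2 : (∑ p : Fin N, if Finset.univ ∩ {p} = ({n} : Finset (Fin N))
      then m1 Finset.univ * m2 {p} else 0) = m1 Finset.univ * m2 {n} := by
    rw [Finset.sum_eq_single n (fun p _ hp => if_neg (by simp [Finset.singleton_inj, hp]))
      (fun h => absurd (Finset.mem_univ n) h)]
    simp
  have t3 : (∑ j : Fin N, if ({j} : Finset (Fin N)) ∩ Finset.univ = {n}
      then m1 {j} * m2 Finset.univ else 0) = m1 {n} * m2 Finset.univ := by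
    rw [Finset.sum_eq_single n (fun j _ hj => if_neg (by simp [Finset.singleton_inj, hj]))
      (fun h => absurd (Finset.mem_univ n) h)]
    simp
  have t4 : (∑ j : Fin N, ∑ p : Fin N, if ({j} : Finset (Fin N)) ∩ {p} = {n}
      then m1 {j} * m2 {p} else 0) = m1 {n} * m2 {n} := by
    simp only [sing_cond n]
    rw [Finset.sum_eq_single n
      (fun j _ hj => Finset.sum_eq_zero fun p _ => if_neg fun h => hj h.1)
      (fun h => absurd (Finset.mem_univ n) h)]
    rw [Finset.sum_eq_single n (fun p _ hp => if_neg fun h => hp h.2)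
      (fun h => absurd (Finset.mem_univ n) h)]
    rw [if_pos ⟨rfl, rfl⟩]
  rw [t2, t3, t4]; ring

lemma sumA_univ (hN : 2 ≤ N) (m1 m2 : Finset (Fin N) → ℝ) (h1 : MySimple m1)
    (h2 : MySimple m2) :
    (∑ B : Finset (Fin N), ∑ C : Finset (Fin N),
      if B ∩ C = Finset.univ then m1 B * m2 C else 0)
    = m1 Finset.univ * m2 Finset.univ := by
  rw [double_sum hN m1 m2 h1 h2]
  rw [if_pos (by simp)]
  rw [Finset.sum_eq_zero (fun p _ => if_neg (by
    simpa using (univ_ne_sing hN p).symm))]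
  rw [Finset.sum_eq_zero (fun j _ => if_neg (by
    simpa using (univ_ne_sing hN j).symm))]
  rw [Finset.sum_eq_zero (fun j _ => Finset.sum_eq_zero fun p _ => if_neg (by
    rw [sInterS]
    split
    · exact (univ_ne_sing hN j).symm
    · exact fun h => univ_ne_empty' hN h.symm))]
  ring

lemma sumA_other (hN : 2 ≤ N) (m1 m2 : Finset (Fin N) → ℝ) (h1 : MySimple m1)
    (h2 : MySimple m2) (A : Finset (Fin N)) (hA0 : A ≠ ∅) (hAu : A ≠ Finset.univ)
    (hAs : ∀ n : Fin N, A ≠ {n}) :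
    (∑ B : Finset (Fin N), ∑ C : Finset (Fin N), if B ∩ C = A then m1 B * m2 C else 0) = 0 := by
  rw [double_sum hN m1 m2 h1 h2]
  rw [if_neg (by simpa using hAu.symm)]
  rw [Finset.sum_eq_zero (fun p _ => if_neg (by simpa using (hAs p).symm))]
  rw [Finset.sum_eq_zero (fun j _ => if_neg (by simpa using (hAs j).symm))]
  rw [Finset.sum_eq_zero (fun j _ => Finset.sum_eq_zero fun p _ => if_neg (by
    rw [sInterS]
    split
    · exact (hAs j).symm
    · exact fun h => hA0 h.symm))]
  ring


lemma edComb_sing (hN : 2 ≤ N) (p q : (Finset (Fin N) → ℝ) × ℝ)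
    (h1 : MySimple p.1) (h2 : MySimple q.1) (n : Fin N) :
    (edComb p q).1 {n} = (1 - conflict p.1 q.1)⁻¹ *
      (p.1 {n} * q.1 {n} + p.1 {n} * q.1 Finset.univ + p.1 Finset.univ * q.1 {n}
        + p.1 {n} * q.2 + p.2 * q.1 {n}) := by
  simp only [edComb]
  rw [if_neg (Finset.singleton_ne_empty n), sumA_singleton hN _ _ h1 h2]

lemma edComb_univ_val (hN : 2 ≤ N) (p q : (Finset (Fin N) → ℝ) × ℝ)
    (h1 : MySimple p.1) (h2 : MySimple q.1) :
    (edComb p q).1 Finset.univ = (1 - conflict p.1 q.1)⁻¹ *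
      (p.1 Finset.univ * q.1 Finset.univ + p.1 Finset.univ * q.2
        + p.2 * q.1 Finset.univ) := by
  simp only [edComb]
  rw [if_neg (univ_ne_empty' hN), sumA_univ hN _ _ h1 h2]

lemma edComb_simple (hN : 2 ≤ N) (p q : (Finset (Fin N) → ℝ) × ℝ)
    (h1 : MySimple p.1) (h2 : MySimple q.1) : MySimple (edComb p q).1 := by
  intro A hAu hAs
  simp only [edComb]
  split
  · rfl
  · rw [sumA_other hN _ _ h1 h2 A (by assumption) hAu hAs, h1 A hAu hAs, h2 A hAu hAs]
    ring

/-- Theorem 2: the modified ER algorithm follows the importance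
discounting and combination scheme. -/
theorem modifiedER_eq_importance_scheme (N L : ℕ) (hN : 2 ≤ N) (hL : 1 ≤ L)
    (β : ℕ → Fin N → ℝ) (w : ℕ → ℝ)
    (hβ : ∀ i < L, ∀ n, 0 ≤ β i n) (hβsum : ∀ i < L, ∑ n, β i n ≤ 1)
    (hw : ∀ i < L, 0 ≤ w i ∧ w i ≤ 1) (hwsum : ∑ i ∈ Finset.range L, w i = 1)
    -- the importance-discounted assessment IBBAs
    (d : ℕ → (Finset (Fin N) → ℝ) × ℝ)
    (hd : ∀ j, d j = impDiscount (w j) (assessBBA (β j)))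
    -- the masses of the modified ER recursion
    (b : ℕ → Fin N → ℝ) (hb : ∀ j n, b j n = w j * β j n)
    (tld : ℕ → ℝ) (htld : ∀ j, tld j = w j * (1 - ∑ n, β j n))
    (brd : ℕ → ℝ) (hbrd : ∀ j, brd j = 1 - w j)
    -- at every step the conflict is strictly less than 1
    (hconf : ∀ i, i + 1 < L → conflict (edCombUpTo d i).1 (d (i + 1)).1 < 1)
    -- the final Ω-mass of the modified ER recursion is strictly less than 1
    (hbar : (merSeq b tld brd (L - 1)).2.2 < 1) :
    (∀ i < L,
      (∀ n : Fin N, (merSeq b tld brd i).1 n = (edCombUpTo d i).1 {n}) ∧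
      (merSeq b tld brd i).2.1 = (edCombUpTo d i).1 Finset.univ ∧
      (merSeq b tld brd i).2.2 = (edCombUpTo d i).2) ∧
    (∀ n : Fin N, (merSeq b tld brd (L - 1)).1 n / (1 - (merSeq b tld brd (L - 1)).2.2)
      = (edCombUpTo d (L - 1)).1 {n} / (1 - (edCombUpTo d (L - 1)).2)) ∧
    (merSeq b tld brd (L - 1)).2.1 / (1 - (merSeq b tld brd (L - 1)).2.2)
      = (edCombUpTo d (L - 1)).1 Finset.univ / (1 - (edCombUpTo d (L - 1)).2) := by
  classical
  have dprop : ∀ j, MySimple (d j).1 ∧ (∀ n : Fin N, (d j).1 {n} = b j n) ∧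
      (d j).1 Finset.univ = tld j ∧ (d j).2 = brd j := by
    intro j
    rw [hd j]
    simp only [impDiscount, assessBBA]
    refine ⟨?_, ?_, ?_, ?_⟩
    · intro A hAu hAs
      simp only
      rw [if_neg hAu, Finset.sum_eq_zero fun n _ => if_neg (hAs n), mul_zero]
    · intro n
      rw [if_neg (univ_ne_sing hN n).symm,
        Finset.sum_eq_single n
          (fun m _ hm => if_neg fun h => hm (Finset.singleton_inj.mp h).symm)
          (fun h => absurd (Finset.mem_univ n) h),
        if_pos rfl, hb]
    · rw [if_pos trivial, htld]
    · rw [hbrd]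
  have inv : ∀ i, MySimple (edCombUpTo d i).1 ∧
      (∀ n : Fin N, (merSeq b tld brd i).1 n = (edCombUpTo d i).1 {n}) ∧
      (merSeq b tld brd i).2.1 = (edCombUpTo d i).1 Finset.univ ∧
      (merSeq b tld brd i).2.2 = (edCombUpTo d i).2 := by
    intro i
    induction i with
    | zero =>
      obtain ⟨hs, h1, h2, h3⟩ := dprop 0
      refine ⟨by simpa [edCombUpTo] using hs, fun n => ?_, ?_, ?_⟩
      · simp [merSeq, edCombUpTo, h1 n]
      · simp [merSeq, edCombUpTo, h2]
      · simp [merSeq, edCombUpTo, h3]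
    | succ i ih =>
      obtain ⟨hsI, hbI, htI, hwI⟩ := ih
      obtain ⟨hs, h1, h2, h3⟩ := dprop (i + 1)
      have hK : conflict (edCombUpTo d i).1 (d (i + 1)).1
          = ∑ j : Fin N, ∑ p : Fin N,
              if p ≠ j then (merSeq b tld brd i).1 j * b (i + 1) p else 0 := by
        rw [conflict_eq hN _ _ hsI hs]
        exact Finset.sum_congr rfl fun j _ => Finset.sum_congr rfl fun p _ => by
          rw [hbI j, h1 p]
      refine ⟨?_, ?_, ?_, ?_⟩
      · show MySimple (edComb (edCombUpTo d i) (d (i + 1))).1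
        exact edComb_simple hN _ _ hsI hs
      · intro n
        show (merStep (merSeq b tld brd i) (b (i + 1)) (tld (i + 1)) (brd (i + 1))).1 n
          = (edComb (edCombUpTo d i) (d (i + 1))).1 {n}
        rw [edComb_sing hN _ _ hsI hs, hK, h1 n, h2, h3, merStep]
        simp only
        rw [hbI n, htI, hwI]
        ring
      · show (merStep (merSeq b tld brd i) (b (i + 1)) (tld (i + 1)) (brd (i + 1))).2.1
          = (edComb (edCombUpTo d i) (d (i + 1))).1 Finset.univ
        rw [edComb_univ_val hN _ _ hsI hs, hK, h2, h3, merStep]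
        simp only
        rw [htI, hwI]
      · show (merStep (merSeq b tld brd i) (b (i + 1)) (tld (i + 1)) (brd (i + 1))).2.2
          = (edComb (edCombUpTo d i) (d (i + 1))).2
        simp only [edComb, merStep]
        rw [hK]
        rw [h3]
        rw [hwI]
  obtain ⟨-, hb1, ht1, hw1⟩ := inv (L - 1)
  refine ⟨fun i _ => ⟨(inv i).2.1, (inv i).2.2⟩, fun n => ?_, ?_⟩
  · rw [hb1 n, hw1]
  · rw [ht1, hw1]
end

section
/- The modified ER algorithm (equivalently, the importance discounting and combination scheme) satisfies the consensus axiom: let H = {H_1,…,H_N} with N ≥ 2, fix a grade k, and suppose all L assessments are precisely assessed to grade H_k (β_{k,i} = 1 and β_{n,i} = 0 for n ≠ k, for every i), with normalized weights w_i ∈ [0,1] satisfying Σ_{i=1}^L w_i = 1. Then the extended Dempster combination of the importance-discounted IBBAs w_1 ⊙ m_1, …, w_L ⊙ m_L is well defined (all conflicts are 0), its Ω-mass ∏_{i=1}^L (1 − w_i) is strictly less than 1, and after normalization (dividing by 1 minus the Ω-mass) the resulting belief degrees are β_k = 1, β_n = 0 for n ≠ k, and β_H = 0. -/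
open Finset

/-!
Discounting the precise assessment to `H_k` by `w_j` gives the IBBA whose only focal element
is `{H_k}` (mass `w_j`, written `Pi.single {k} (w j)`) and whose `Ω`-mass is `1 - w_j`. Two such
IBBAs with the same nonempty focal element do not conflict, and their extended Dempster
combination is again of this form, with the `Ω`-masses multiplied. Hence after `L` steps the
`Ω`-mass is `∏ (1 - w_i)` and all the rest sits on `{H_k}`; as some `w_j > 0`, this product is
below `1`, and normalizing puts belief `1` on `H_k`.
-/

section SingleFocal

variable {Θ : Type*} [Fintype Θ] [DecidableEq Θ]

lemma sum_sum_ite_single_mul_single (p : Finset Θ → Finset Θ → Prop) [DecidableRel p]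
    (S T : Finset Θ) (a b : ℝ) :
    (∑ B : Finset Θ, ∑ C : Finset Θ,
      if p B C then (Pi.single S a : Finset Θ → ℝ) B * (Pi.single T b : Finset Θ → ℝ) C else 0)
      = if p S T then a * b else 0 := by
  rw [Fintype.sum_eq_single S fun B hB => by simp [hB],
    Fintype.sum_eq_single T fun C hC => by simp [hC]]
  simp

lemma conflict_single_single (S T : Finset Θ) (a b : ℝ) :
    conflict (Pi.single S a) (Pi.single T b) = if S ∩ T = ∅ then a * b else 0 :=
  sum_sum_ite_single_mul_single _ S T a b

lemma edComb_single_single {S : Finset Θ} (hS : S.Nonempty) (a b u v : ℝ) :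
    edComb (Pi.single S a, u) (Pi.single S b, v) =
      (Pi.single S (a * b + a * v + u * b), u * v) := by
  have hconf : conflict (Pi.single S a) (Pi.single S b) = 0 := by
    simp [conflict_single_single, hS.ne_empty]
  ext A
  · simp only [edComb, hconf, sub_zero, inv_one, one_mul, sum_sum_ite_single_mul_single, inter_self]
    rcases eq_or_ne A S with rfl | hA
    · simp [hS.ne_empty]
    · simp [hA, Ne.symm hA]
  · simp [edComb, hconf]

lemma impDiscount_single (β a : ℝ) (S : Finset Θ) :
    impDiscount β (Pi.single S a) = (Pi.single S (β * a), 1 - β) := by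
  ext A
  · simp [impDiscount, Pi.single_apply]
  · rfl

lemma edCombUpTo_of_single {S : Finset Θ} (hS : S.Nonempty) (w : ℕ → ℝ)
    (d : ℕ → (Finset Θ → ℝ) × ℝ) (hd : ∀ j, d j = (Pi.single S (w j), 1 - w j)) (i : ℕ) :
    edCombUpTo d i =
      (Pi.single S (1 - ∏ j ∈ range (i + 1), (1 - w j)), ∏ j ∈ range (i + 1), (1 - w j)) := by
  induction i with
  | zero => simp [edCombUpTo, hd]
  | succ i ih =>
    rw [edCombUpTo, ih, hd, edComb_single_single hS, prod_range_succ _ (i + 1)]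
    congr 2
    ring

end SingleFocal

lemma assessBBA_precise {N : ℕ} [Nontrivial (Fin N)] (k : Fin N) :
    assessBBA (fun n => if n = k then (1 : ℝ) else 0) = Pi.single {k} 1 := by
  have huniv : (univ : Finset (Fin N)) ≠ {k} := univ_nontrivial.ne_singleton
  ext A
  rcases eq_or_ne A univ with rfl | hA
  · simp [assessBBA, huniv]
  · rw [assessBBA, if_neg hA, Fintype.sum_eq_single k fun n hn => by simp [hn]]
    simp [Pi.single_apply]

lemma prod_one_sub_lt_one {ι : Type*} {s : Finset ι} {w : ι → ℝ}
    (hw : ∀ i ∈ s, 0 ≤ w i ∧ w i ≤ 1) {j : ι} (hj : j ∈ s) (hwj : 0 < w j) :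
    ∏ i ∈ s, (1 - w i) < 1 := by
  classical
  have hrest : ∏ i ∈ s.erase j, (1 - w i) ≤ 1 :=
    prod_le_one (fun i hi => by linarith [hw i (mem_of_mem_erase hi)])
      (fun i hi => by linarith [hw i (mem_of_mem_erase hi)])
  calc ∏ i ∈ s, (1 - w i) = (1 - w j) * ∏ i ∈ s.erase j, (1 - w i) :=
        (mul_prod_erase s _ hj).symm
    _ ≤ 1 - w j := mul_le_of_le_one_right (by linarith [hw j hj]) hrest
    _ < 1 := by linarith

/-- the modified ER algorithm (the importance discounting and
combination scheme) satisfies the consensus axiom. -/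
theorem modifiedER_consensus (N L : ℕ) (hN : 2 ≤ N) (hL : 1 ≤ L)
    (k : Fin N) (w : ℕ → ℝ) (hw : ∀ i < L, 0 ≤ w i ∧ w i ≤ 1)
    (hwsum : ∑ i ∈ Finset.range L, w i = 1)
    -- the importance-discounted IBBAs of the precise assessments to H_k
    (d : ℕ → (Finset (Fin N) → ℝ) × ℝ)
    (hd : ∀ j, d j = impDiscount (w j)
      (assessBBA (fun n => if n = k then (1 : ℝ) else 0))) :
    (∀ i, i + 1 < L → conflict (edCombUpTo d i).1 (d (i + 1)).1 = 0) ∧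
    (edCombUpTo d (L - 1)).2 = ∏ i ∈ Finset.range L, (1 - w i) ∧
    (edCombUpTo d (L - 1)).2 < 1 ∧
    (edCombUpTo d (L - 1)).1 {k} / (1 - (edCombUpTo d (L - 1)).2) = 1 ∧
    (∀ n : Fin N, n ≠ k →
      (edCombUpTo d (L - 1)).1 {n} / (1 - (edCombUpTo d (L - 1)).2) = 0) ∧
    (edCombUpTo d (L - 1)).1 Finset.univ / (1 - (edCombUpTo d (L - 1)).2) = 0 := by
  have : Nontrivial (Fin N) := Fin.nontrivial_iff_two_le.mpr hN
  have hd_single : ∀ j, d j = (Pi.single {k} (w j), 1 - w j) := fun j => by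
    rw [hd, assessBBA_precise, impDiscount_single, mul_one]
  have hcomb := edCombUpTo_of_single (singleton_nonempty k) w d hd_single
  have hfinal := hcomb (L - 1)
  rw [Nat.sub_add_cancel hL] at hfinal
  obtain ⟨j, hj, hwj⟩ : ∃ j ∈ range L, 0 < w j :=
    exists_lt_of_sum_lt (by simp [hwsum])
  have hP := prod_one_sub_lt_one (fun i hi => hw i (mem_range.mp hi)) hj hwj
  have hden : 1 - ∏ i ∈ range L, (1 - w i) ≠ 0 := by linarith
  refine ⟨fun i _ => ?_, by rw [hfinal], by rwa [hfinal], ?_, fun n hn => ?_, ?_⟩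
  · simp [hcomb, hd_single, conflict_single_single]
  · simp [hfinal, div_self hden]
  · simp [hfinal, hn]
  · simp [hfinal, univ_nontrivial.ne_singleton]
end

section
/- The modified ER algorithm (equivalently, the importance discounting and combination scheme) satisfies the incompleteness axiom: let H = {H_1,…,H_N} with N ≥ 2, let the L ≥ 2 assessments have belief degrees β_{n,i} ≥ 0 with Σ_n β_{n,i} ≤ 1 and normalized weights w_i with 0 < w_i < 1 and Σ_{i=1}^L w_i = 1, and suppose some assessment i_0 is incomplete, i.e. Σ_{n=1}^N β_{n,i_0} < 1. If at every step of the iterated extended Dempster combination of the importance-discounted IBBAs w_i ⊙ m_i the conflict is strictly less than 1, then the final Ω-mass is strictly less than 1 and the normalized belief degree β_H (the normalized mass assigned to the whole frame H) is strictly positive; i.e. the aggregated assessment is also incomplete. -/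
open Finset

/-! The Ω-mass of the importance-discounted assessment `w_i ⊙ m_i` is `1 - w_i > 0`. The extended
Dempster rule gives `Θ` at least the mass `K·(m₁(Θ)·ω₂ + ω₁·m₂(Θ))` and `Ω` the mass `K·ω₁·ω₂`,
so the Ω-mass stays positive along the iteration, and the mass on `Θ` becomes positive once the
incomplete assessment (with `m_{i₀}(Θ) = w_{i₀}·(1 - Σₙ β_{n,i₀}) > 0`) has been combined and stays
positive afterwards. The combination preserves total mass `1`, so the final Ω-mass is below `1`. -/

section ExtendedDempster

variable {Θ : Type*} [Fintype Θ] [DecidableEq Θ]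

/-- The unnormalized conjunctive rule of combination. -/
def conjComb (m1 m2 : Finset Θ → ℝ) (A : Finset Θ) : ℝ :=
  ∑ B : Finset Θ, ∑ C : Finset Θ, if B ∩ C = A then m1 B * m2 C else 0

theorem conjComb_empty (m1 m2 : Finset Θ → ℝ) : conjComb m1 m2 ∅ = conflict m1 m2 := rfl

theorem conjComb_nonneg {m1 m2 : Finset Θ → ℝ} (h1 : ∀ A, 0 ≤ m1 A) (h2 : ∀ A, 0 ≤ m2 A)
    (A : Finset Θ) : 0 ≤ conjComb m1 m2 A :=
  sum_nonneg fun B _ => sum_nonneg fun C _ => by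
    split_ifs
    exacts [mul_nonneg (h1 B) (h2 C), le_rfl]

theorem sum_conjComb (m1 m2 : Finset Θ → ℝ) :
    ∑ A, conjComb m1 m2 A = (∑ A, m1 A) * ∑ A, m2 A := by
  simp only [conjComb, sum_mul_sum]
  rw [sum_comm]
  refine sum_congr rfl fun B _ => ?_
  rw [sum_comm]
  exact sum_congr rfl fun C _ => by simp

theorem edComb_fst_of_ne_empty (p q : (Finset Θ → ℝ) × ℝ) {A : Finset Θ} (hA : A ≠ ∅) :
    (edComb p q).1 A =
      (1 - conflict p.1 q.1)⁻¹ * (conjComb p.1 q.1 A + p.1 A * q.2 + p.2 * q.1 A) :=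
  if_neg hA

theorem edComb_snd (p q : (Finset Θ → ℝ) × ℝ) :
    (edComb p q).2 = (1 - conflict p.1 q.1)⁻¹ * (p.2 * q.2) := rfl

theorem isIBBA_edComb {p q : (Finset Θ → ℝ) × ℝ} (hp : IsIBBA p.1 p.2) (hq : IsIBBA q.1 q.2)
    (hc : conflict p.1 q.1 < 1) : IsIBBA (edComb p q).1 (edComb p q).2 := by
  obtain ⟨hp0, hpnn, hpω, hpsum⟩ := hp
  obtain ⟨hq0, hqnn, hqω, hqsum⟩ := hq
  set K := (1 - conflict p.1 q.1)⁻¹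
  have hK : 0 < K := inv_pos.2 (sub_pos.2 hc)
  set g : Finset Θ → ℝ := fun A => K * (conjComb p.1 q.1 A + p.1 A * q.2 + p.2 * q.1 A)
  -- The uniform formula `g` would give `∅` the mass `K·c`, where the rule puts `0`.
  have hg : ∀ A, (edComb p q).1 A = g A - if A = ∅ then K * conflict p.1 q.1 else 0 := by
    intro A
    by_cases hA : A = ∅
    · subst hA
      simp [g, edComb, hp0, hq0, conjComb_empty]
    · rw [edComb_fst_of_ne_empty p q hA, if_neg hA, sub_zero]
  refine ⟨by simp [edComb], fun A => ?_, ?_, ?_⟩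
  · by_cases hA : A = ∅
    · exact (if_pos hA).ge
    · rw [edComb_fst_of_ne_empty p q hA]
      have := conjComb_nonneg hpnn hqnn A
      have := mul_nonneg (hpnn A) hqω
      have := mul_nonneg hpω (hqnn A)
      positivity
  · exact mul_nonneg hK.le (mul_nonneg hpω hqω)
  · have hsum_g : ∑ A, g A = K * ((1 - p.2) * (1 - q.2) + (1 - p.2) * q.2 + p.2 * (1 - q.2)) := by
      simp only [g, ← mul_sum, sum_add_distrib, sum_conjComb, ← sum_mul]
      rw [show ∑ A, p.1 A = 1 - p.2 by linarith, show ∑ A, q.1 A = 1 - q.2 by linarith]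
    have hKc : K * (1 - conflict p.1 q.1) = 1 := inv_mul_cancel₀ (sub_pos.2 hc).ne'
    simp only [hg, sum_sub_distrib, sum_ite_eq', mem_univ, if_true, hsum_g, edComb_snd]
    linear_combination hKc

theorem edComb_snd_pos {p q : (Finset Θ → ℝ) × ℝ} (hc : conflict p.1 q.1 < 1)
    (hp : 0 < p.2) (hq : 0 < q.2) : 0 < (edComb p q).2 :=
  mul_pos (inv_pos.2 (sub_pos.2 hc)) (mul_pos hp hq)

theorem edComb_univ_pos [Nonempty Θ] {p q : (Finset Θ → ℝ) × ℝ}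
    (hp : IsIBBA p.1 p.2) (hq : IsIBBA q.1 q.2) (hc : conflict p.1 q.1 < 1)
    (hpω : 0 < p.2) (hqω : 0 < q.2) (huniv : 0 < p.1 univ ∨ 0 < q.1 univ) :
    0 < (edComb p q).1 univ := by
  rw [edComb_fst_of_ne_empty p q univ_nonempty.ne_empty]
  have hT := conjComb_nonneg hp.2.1 hq.2.1 univ
  have hmass : 0 < p.1 univ * q.2 + p.2 * q.1 univ := by
    have := hp.2.1 univ
    have := hq.2.1 univ
    rcases huniv with h | h <;> positivity
  exact mul_pos (inv_pos.2 (sub_pos.2 hc)) (by linarith)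

theorem IsIBBA.snd_lt_one_of_pos {m : Finset Θ → ℝ} {ω : ℝ} (h : IsIBBA m ω) {A : Finset Θ}
    (hA : 0 < m A) : ω < 1 := by
  have := single_le_sum (fun B _ => h.2.1 B) (mem_univ A)
  linarith [h.2.2.2]

end ExtendedDempster

section Iteration

variable {Θ : Type*} [Fintype Θ] [DecidableEq Θ] {d : ℕ → (Finset Θ → ℝ) × ℝ} {i : ℕ}

theorem isIBBA_edCombUpTo (hd : ∀ j ≤ i, IsIBBA (d j).1 (d j).2)
    (hc : ∀ j < i, conflict (edCombUpTo d j).1 (d (j + 1)).1 < 1) :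
    IsIBBA (edCombUpTo d i).1 (edCombUpTo d i).2 := by
  induction i with
  | zero => exact hd 0 le_rfl
  | succ i ih =>
    exact isIBBA_edComb (ih (fun j hj => hd j (by omega)) (fun j hj => hc j (by omega)))
      (hd (i + 1) le_rfl) (hc i (by omega))

theorem edCombUpTo_snd_pos (hd : ∀ j ≤ i, 0 < (d j).2)
    (hc : ∀ j < i, conflict (edCombUpTo d j).1 (d (j + 1)).1 < 1) :
    0 < (edCombUpTo d i).2 := by
  induction i with
  | zero => exact hd 0 le_rfl
  | succ i ih =>
    exact edComb_snd_pos (hc i (by omega))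
      (ih (fun j hj => hd j (by omega)) (fun j hj => hc j (by omega))) (hd (i + 1) le_rfl)

theorem edCombUpTo_univ_pos [Nonempty Θ] (hd : ∀ j ≤ i, IsIBBA (d j).1 (d j).2)
    (hdω : ∀ j ≤ i, 0 < (d j).2)
    (hc : ∀ j < i, conflict (edCombUpTo d j).1 (d (j + 1)).1 < 1)
    {i0 : ℕ} (hi0 : i0 ≤ i) (huniv : 0 < (d i0).1 univ) :
    0 < (edCombUpTo d i).1 univ := by
  induction i with
  | zero =>
    obtain rfl := Nat.le_zero.1 hi0
    exact huniv
  | succ i ih =>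
    have hd' : ∀ j ≤ i, IsIBBA (d j).1 (d j).2 := fun j hj => hd j (by omega)
    have hdω' : ∀ j ≤ i, 0 < (d j).2 := fun j hj => hdω j (by omega)
    have hc' : ∀ j < i, conflict (edCombUpTo d j).1 (d (j + 1)).1 < 1 :=
      fun j hj => hc j (by omega)
    refine edComb_univ_pos (isIBBA_edCombUpTo hd' hc') (hd (i + 1) le_rfl) (hc i (by omega))
      (edCombUpTo_snd_pos hdω' hc') (hdω (i + 1) le_rfl) ?_
    rcases Nat.lt_or_ge i0 (i + 1) with h | h
    · exact .inl (ih hd' hdω' hc' (by omega))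
    · exact .inr (le_antisymm hi0 h ▸ huniv)

end Iteration

theorem isIBBA_impDiscount {Θ : Type*} [Fintype Θ] [DecidableEq Θ] {m : Finset Θ → ℝ}
    (hm : IsBBA m) {β : ℝ} (hβ0 : 0 ≤ β) (hβ1 : β ≤ 1) :
    IsIBBA (impDiscount β m).1 (impDiscount β m).2 := by
  obtain ⟨h0, hnn, hsum⟩ := hm
  refine ⟨by simp [impDiscount, h0], fun A => mul_nonneg hβ0 (hnn A), sub_nonneg.2 hβ1, ?_⟩
  simp [impDiscount, ← mul_sum, hsum]

theorem assessBBA_univ {N : ℕ} (β : Fin N → ℝ) : assessBBA β univ = 1 - ∑ n, β n :=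
  if_pos rfl

theorem isBBA_assessBBA {N : ℕ} (hN : 2 ≤ N) {β : Fin N → ℝ} (h0 : ∀ n, 0 ≤ β n)
    (h1 : ∑ n, β n ≤ 1) : IsBBA (assessBBA β) := by
  have huniv_ne : ∀ n : Fin N, (univ : Finset (Fin N)) ≠ {n} := fun n h => by
    have := congrArg card h
    simp at this
    omega
  have hempty_ne : (∅ : Finset (Fin N)) ≠ univ :=
    (univ_nonempty_iff.2 ⟨⟨0, by omega⟩⟩).ne_empty.symm
  have hsplit : ∀ A, assessBBA β A = (if A = univ then 1 - ∑ n, β n else 0) +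
      ∑ n, if A = {n} then β n else 0 := by
    intro A
    by_cases hA : A = univ
    · subst hA
      simp [assessBBA, huniv_ne]
    · simp [assessBBA, hA]
  refine ⟨?_, fun A => ?_, ?_⟩
  · simp [hsplit, hempty_ne]
  · rw [hsplit]
    have : ∀ n, 0 ≤ if A = {n} then β n else 0 := fun n => by split_ifs <;> simp [h0]
    have := sum_nonneg fun n (_ : n ∈ univ) => this n
    split_ifs <;> linarith
  · rw [sum_congr rfl fun A _ => hsplit A, sum_add_distrib, sum_comm]
    simp

theorem modifiedER_incompleteness_general (N L : ℕ) (hN : 2 ≤ N)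
    (β : ℕ → Fin N → ℝ) (w : ℕ → ℝ)
    (hβ : ∀ i < L, ∀ n, 0 ≤ β i n) (hβsum : ∀ i < L, ∑ n, β i n ≤ 1)
    (hw : ∀ i < L, 0 < w i ∧ w i < 1)
    -- some assessment is incomplete
    (i0 : ℕ) (hi0 : i0 < L) (hinc : ∑ n, β i0 n < 1)
    (d : ℕ → (Finset (Fin N) → ℝ) × ℝ)
    (hd : ∀ j, d j = impDiscount (w j) (assessBBA (β j)))
    (hconf : ∀ i, i + 1 < L → conflict (edCombUpTo d i).1 (d (i + 1)).1 < 1) :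
    (edCombUpTo d (L - 1)).2 < 1 ∧
    0 < (edCombUpTo d (L - 1)).1 Finset.univ / (1 - (edCombUpTo d (L - 1)).2) := by
  have : Nonempty (Fin N) := ⟨⟨0, by omega⟩⟩
  have hIBBA : ∀ j ≤ L - 1, IsIBBA (d j).1 (d j).2 := fun j hj => by
    rw [hd j]
    exact isIBBA_impDiscount (isBBA_assessBBA hN (hβ j (by omega)) (hβsum j (by omega)))
      (hw j (by omega)).1.le (hw j (by omega)).2.le
  have hω : ∀ j ≤ L - 1, 0 < (d j).2 := fun j hj => by
    rw [hd j]
    exact sub_pos.2 (hw j (by omega)).2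
  have hmi0 : 0 < (d i0).1 univ := by
    rw [hd i0]
    exact mul_pos (hw i0 hi0).1 (by rw [assessBBA_univ]; linarith)
  have hc : ∀ j < L - 1, conflict (edCombUpTo d j).1 (d (j + 1)).1 < 1 :=
    fun j hj => hconf j (by omega)
  have hpos := edCombUpTo_univ_pos hIBBA hω hc (by omega) hmi0
  have hlt := (isIBBA_edCombUpTo hIBBA hc).snd_lt_one_of_pos hpos
  exact ⟨hlt, div_pos hpos (sub_pos.2 hlt)⟩

/-- the modified ER algorithm (the importance discounting and
combination scheme) satisfies the incompleteness axiom. -/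
theorem modifiedER_incompleteness (N L : ℕ) (hN : 2 ≤ N) (hL : 2 ≤ L)
    (β : ℕ → Fin N → ℝ) (w : ℕ → ℝ)
    (hβ : ∀ i < L, ∀ n, 0 ≤ β i n) (hβsum : ∀ i < L, ∑ n, β i n ≤ 1)
    (hw : ∀ i < L, 0 < w i ∧ w i < 1) (hwsum : ∑ i ∈ Finset.range L, w i = 1)
    -- some assessment is incomplete
    (i0 : ℕ) (hi0 : i0 < L) (hinc : ∑ n, β i0 n < 1)
    (d : ℕ → (Finset (Fin N) → ℝ) × ℝ)
    (hd : ∀ j, d j = impDiscount (w j) (assessBBA (β j)))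
    (hconf : ∀ i, i + 1 < L → conflict (edCombUpTo d i).1 (d (i + 1)).1 < 1) :
    (edCombUpTo d (L - 1)).2 < 1 ∧
    0 < (edCombUpTo d (L - 1)).1 Finset.univ / (1 - (edCombUpTo d (L - 1)).2) :=
  modifiedER_incompleteness_general N L hN β w hβ hβsum hw i0 hi0 hinc d hd hconf
end
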